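/- Let Λ be a k-graph. Then the topological realization X_Λ is a k-dimensional CW-complex whose r-skeleton is X_Λ^r for each r ≤ k; the open cells are the sets Q_λ for λ ∈ Λ with d(λ) ≤ 1_k, an open cell Q_λ having dimension |d(λ)|, and the closed cells are the closures of the Q_λ. -/

import Mathlib

/-!
Every point `[a, s]` of `X_Λ` equals `[a(⌊s⌋, ⌈s⌉), s - ⌊s⌋]`, a point of the open cube of a
morphism of degree `≤ 1_k`, and by unique factorization this canonical representative is
unique; so the `Q_λ` partition `X_Λ`. The fractional coordinates are well defined on `X_Λ` and
continuous where they are positive, which inverts `t ↦ [λ, t]` on each open cell. The image of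
the closed cube `[0, d(λ)]` is closed because on each sheet `{a} × [0, d(a)]` its preimage is the
finite union of the boxes `[m, n]` for which `a(m, n)` is a segment of `λ`; by density of the
open cube this image is `closure Q_λ`. A boundary point has an integral coordinate in a
direction where `d(λ)` is `1`, so its canonical morphism has smaller degree. As there are no
cells of dimension above `k`, `X_Λ = X_Λ^k` and the weak topology condition is automatic.
-/

/-- A `k`-graph: a countable small category (objects identified with the
identity morphisms, i.e. the morphisms of degree `0`) equipped with a degree
functor `d : Λ → ℕᵏ` satisfying the unique factorization property. -/
structure KGraph (k : ℕ) where
  /-- The morphisms of the category. -/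
  Mor : Type
  /-- The category is countable. -/
  countable : Countable Mor
  /-- The source (domain) of a morphism, viewed as a degree-zero morphism. -/
  src : Mor → Mor
  /-- The range (codomain) of a morphism, viewed as a degree-zero morphism. -/
  rng : Mor → Mor
  /-- Composition `comp a b = a ∘ b`, meaningful when `src a = rng b`. -/
  comp : Mor → Mor → Mor
  /-- The degree functor. -/
  deg : Mor → Fin k → ℕ
  src_src : ∀ a, src (src a) = src a
  rng_src : ∀ a, rng (src a) = src a
  src_rng : ∀ a, src (rng a) = rng a
  rng_rng : ∀ a, rng (rng a) = rng a
  deg_src : ∀ a, deg (src a) = 0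
  deg_rng : ∀ a, deg (rng a) = 0
  src_comp : ∀ a b, src a = rng b → src (comp a b) = src b
  rng_comp : ∀ a b, src a = rng b → rng (comp a b) = rng a
  comp_assoc : ∀ a b c, src a = rng b → src b = rng c →
    comp (comp a b) c = comp a (comp b c)
  id_comp : ∀ a, comp (rng a) a = a
  comp_id : ∀ a, comp a (src a) = a
  deg_comp : ∀ a b, src a = rng b → deg (comp a b) = deg a + deg b
  /-- The unique factorization property. -/
  factor : ∀ (a : Mor) (m n : Fin k → ℕ), deg a = m + n →
    ∃! p : Mor × Mor, deg p.1 = m ∧ deg p.2 = n ∧ src p.1 = rng p.2 ∧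
      comp p.1 p.2 = a

namespace KGraph

variable {k : ℕ} (Λ : KGraph k)

/-- The segment `a(m,n)` of a morphism `a`, i.e. the (unique) middle factor of
`a = a(0,m) a(m,n) a(n, d(a))`; junk value `a` if no such factorization exists. -/
noncomputable def seg (a : Λ.Mor) (m n : Fin k → ℕ) : Λ.Mor :=
  letI := Classical.propDecidable
  if h : ∃ b : Λ.Mor, Λ.deg b = n - m ∧ ∃ x y : Λ.Mor,
      Λ.deg x = m ∧ Λ.src x = Λ.rng b ∧ Λ.src b = Λ.rng y ∧
      a = Λ.comp x (Λ.comp b y)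
  then h.choose else a

/-- The points `⨆_{λ ∈ Λ} {λ} × [0, d(λ)]` of which the topological
realization is a quotient; topologized as a disjoint union of subspaces of `ℝᵏ`. -/
def Points : Type :=
  Σ a : Λ.Mor, { t : Fin k → ℝ // ∀ i, 0 ≤ t i ∧ t i ≤ (Λ.deg a i : ℝ) }

instance : TopologicalSpace Λ.Points :=
  inferInstanceAs (TopologicalSpace
    (Σ a : Λ.Mor, { t : Fin k → ℝ // ∀ i, 0 ≤ t i ∧ t i ≤ (Λ.deg a i : ℝ) }))

/-- Coordinatewise floor `⌊t⌋` (as a vector of naturals; this is the honest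
floor on the relevant region `t ≥ 0`). -/
noncomputable def fl (t : Fin k → ℝ) : Fin k → ℕ := fun i => (⌊t i⌋).toNat

/-- Coordinatewise ceiling `⌈t⌉`. -/
noncomputable def ce (t : Fin k → ℝ) : Fin k → ℕ := fun i => (⌈t i⌉).toNat

/-- The fractional part `t - ⌊t⌋`. -/
noncomputable def frac (t : Fin k → ℝ) : Fin k → ℝ := fun i => t i - ((⌊t i⌋).toNat : ℝ)

/-- The relation `(μ,s) ∼ (ν,t) ⟺ μ(⌊s⌋,⌈s⌉) = ν(⌊t⌋,⌈t⌉)` and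
`s - ⌊s⌋ = t - ⌊t⌋` defining the topological realization. -/
def ptRel : Λ.Points → Λ.Points → Prop := fun p q =>
  Λ.seg p.1 (fl p.2.1) (ce p.2.1) = Λ.seg q.1 (fl q.2.1) (ce q.2.1) ∧
    frac p.2.1 = frac q.2.1

/-- `ptRel` is an equivalence relation. -/
def ptSetoid : Setoid Λ.Points where
  r := Λ.ptRel
  iseqv := ⟨fun _ => ⟨rfl, rfl⟩, fun h => ⟨h.1.symm, h.2.symm⟩,
    fun h h' => ⟨h.1.trans h'.1, h.2.trans h'.2⟩⟩

/-- The topological realization `X_Λ` of the `k`-graph `Λ`. -/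
def Real : Type := Quotient Λ.ptSetoid

instance : TopologicalSpace Λ.Real :=
  inferInstanceAs (TopologicalSpace (Quotient Λ.ptSetoid))

/-- The class `[λ, t] ∈ X_Λ` of a pair `(λ, t)` with `0 ≤ t ≤ d(λ)`. -/
def pt (a : Λ.Mor) (t : Fin k → ℝ) (h : ∀ i, 0 ≤ t i ∧ t i ≤ (Λ.deg a i : ℝ)) :
    Λ.Real :=
  Quotient.mk Λ.ptSetoid ⟨a, ⟨t, h⟩⟩

/-- The open cube `Q_λ = {[λ,t] : t ∈ (0, d(λ))}` of a morphism `λ` (of degree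
`≤ (1,…,1)`). -/
def Qcube (lam : Λ.Mor) : Set Λ.Real :=
  { x | ∃ (t : Fin k → ℝ) (h : ∀ i, 0 ≤ t i ∧ t i ≤ (Λ.deg lam i : ℝ)),
      (∀ i, Λ.deg lam i = 1 → 0 < t i ∧ t i < 1) ∧ x = Λ.pt lam t h }

/-- The `r`-skeleton `X_Λ^r` of the topological realization. -/
def skel' (G : KGraph k) : ℕ → Set G.Real
  | 0 => ⋃ v ∈ { v : G.Mor | G.deg v = 0 }, G.Qcube v
  | (r+1) => skel' G r ∪
      ⋃ lam ∈ { lam : G.Mor | G.deg lam ≤ 1 ∧ ∑ i, G.deg lam i = r + 1 },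
        G.Qcube lam

/-- The `r`-skeleton (wrapper). -/
def skel (r : ℕ) : Set Λ.Real := skel' Λ r

/-- A `k`-graph is connected if any two vertices are joined by an undirected
path of morphisms. -/
def Connected : Prop :=
  ∀ u v : Λ.Mor, Λ.deg u = 0 → Λ.deg v = 0 →
    Relation.ReflTransGen (fun x y => ∃ e : Λ.Mor,
      (Λ.src e = x ∧ Λ.rng e = y) ∨ (Λ.src e = y ∧ Λ.rng e = x)) u v

end KGraph

/-- A morphism of `k`-graphs: a degree-preserving functor. -/
@[ext]
structure KGraphHom {k : ℕ} (Λ Γ : KGraph k) where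
  toFun : Λ.Mor → Γ.Mor
  map_src : ∀ a, toFun (Λ.src a) = Γ.src (toFun a)
  map_rng : ∀ a, toFun (Λ.rng a) = Γ.rng (toFun a)
  map_comp : ∀ a b, Λ.src a = Λ.rng b →
    toFun (Λ.comp a b) = Γ.comp (toFun a) (toFun b)
  map_deg : ∀ a, Γ.deg (toFun a) = Λ.deg a

namespace KGraphHom

variable {k : ℕ} {Λ Γ Θ : KGraph k}

/-- The identity `k`-graph morphism. -/
def id (Λ : KGraph k) : KGraphHom Λ Λ :=
  ⟨fun a => a, fun _ => rfl, fun _ => rfl, fun _ _ _ => rfl, fun _ => rfl⟩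

/-- Composition of `k`-graph morphisms. -/
def comp (ψ : KGraphHom Γ Θ) (φ : KGraphHom Λ Γ) : KGraphHom Λ Θ where
  toFun := ψ.toFun ∘ φ.toFun
  map_src a := by simp [Function.comp, φ.map_src, ψ.map_src]
  map_rng a := by simp [Function.comp, φ.map_rng, ψ.map_rng]
  map_comp a b h := by
    simp only [Function.comp]
    rw [φ.map_comp a b h, ψ.map_comp _ _ (by rw [← φ.map_src, ← φ.map_rng, h])]
  map_deg a := by simp [Function.comp, φ.map_deg, ψ.map_deg]

/-- The induced map on points `(λ, t) ↦ (φ(λ), t)`. -/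
def pointMap (φ : KGraphHom Λ Γ) : Λ.Points → Γ.Points :=
  fun p => ⟨φ.toFun p.1, ⟨p.2.1, fun i => by rw [φ.map_deg]; exact p.2.2 i⟩⟩

/-- The induced map `φ̃ : X_Λ → X_Γ` on topological realizations,
`φ̃([λ,t]) = [φ(λ), t]` (defined via choice of representatives). -/
noncomputable def real (φ : KGraphHom Λ Γ) : Λ.Real → Γ.Real :=
  fun x => Quotient.mk Γ.ptSetoid (φ.pointMap (Quotient.out x))

end KGraphHom

/-- A covering of `k`-graphs: a surjective degree-preserving functor
`p : Ω → Λ` mapping `Ωv` bijectively onto `Λp(v)` and `vΩ` bijectively onto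
`p(v)Λ` for every vertex `v` of `Ω`. -/
def KGraphHom.IsCovering {k : ℕ} {Ω Λ : KGraph k} (p : KGraphHom Ω Λ) : Prop :=
  Function.Surjective p.toFun ∧
    ∀ v : Ω.Mor, Ω.deg v = 0 →
      Set.BijOn p.toFun { a | Ω.src a = v } { b | Λ.src b = p.toFun v } ∧
      Set.BijOn p.toFun { a | Ω.rng a = v } { b | Λ.rng b = p.toFun v }

open KGraph in
/-- A CW-structure on the topological realization `X_Λ` of a `k`-graph, with
`r`-skeleton `X_Λ^r` and one cell `Q_λ` of dimension `|d(λ)|` for each `λ` with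
`d(λ) ≤ 1_k`: the cells are disjoint and cover `X_Λ`; each open cell `Q_λ` is
homeomorphic to an open cube of dimension `|d(λ)|`; each cell admits a
characteristic map `F` defined on the closed cube `[0, d(λ)]`, which restricts
to a homeomorphism of the open cube onto `Q_λ`, has image the closed cell
`closure Q_λ`, and maps the boundary of the cube into the skeleton of dimension
`|d(λ)| - 1`; the whole space is the `k`-skeleton; and `X_Λ` carries the weak
topology determined by the skeleta. -/
structure RealizationIsCWComplex {k : ℕ} (Λ : KGraph k) : Prop where
  /-- The `k`-skeleton is everything: `X_Λ` is a `k`-dimensional CW-complex. -/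
  skel_top : Λ.skel k = Set.univ
  /-- The open cells cover `X_Λ`. -/
  cells_cover : (⋃ lam ∈ { lam : Λ.Mor | Λ.deg lam ≤ 1 }, Λ.Qcube lam) = Set.univ
  /-- The open cells are pairwise disjoint. -/
  cells_disjoint : { lam : Λ.Mor | Λ.deg lam ≤ 1 }.PairwiseDisjoint Λ.Qcube
  /-- Each open cell `Q_λ` has dimension `|d(λ)|`. -/
  cell_dim : ∀ lam : Λ.Mor, Λ.deg lam ≤ 1 →
    Nonempty (↥(Λ.Qcube lam) ≃ₜ
      ↥{ t : Fin (∑ i, Λ.deg lam i) → ℝ | ∀ i, 0 < t i ∧ t i < 1 })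
  /-- Characteristic maps: for each cell a continuous map on the closed cube
  `[0, d(λ)]`, given by `t ↦ [λ, t]`, restricting to a homeomorphism of the
  open cube onto the open cell, with image the closed cell and mapping the
  boundary of the cube into the `(|d(λ)| - 1)`-skeleton. -/
  char_maps : ∀ lam : Λ.Mor, Λ.deg lam ≤ 1 →
    ∃ F : C(↥{ t : Fin k → ℝ | ∀ i, 0 ≤ t i ∧ t i ≤ (Λ.deg lam i : ℝ) }, Λ.Real),
      (∀ tp, F tp = Λ.pt lam tp.1 tp.2) ∧
      Set.range F = closure (Λ.Qcube lam) ∧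
      (∃ G : ↥{ tp : ↥{ t : Fin k → ℝ | ∀ i, 0 ≤ t i ∧ t i ≤ (Λ.deg lam i : ℝ) } |
            ∀ i, Λ.deg lam i = 1 → 0 < tp.1 i ∧ tp.1 i < 1 } ≃ₜ ↥(Λ.Qcube lam),
        ∀ tp, (G tp).1 = F tp.1) ∧
      (F '' { tp | ¬ ∀ i, Λ.deg lam i = 1 → 0 < tp.1 i ∧ tp.1 i < 1 }
        ⊆ Λ.skel (∑ i, Λ.deg lam i - 1))
  /-- `X_Λ` carries the weak topology determined by the skeleta. -/
  weak_topology : ∀ U : Set Λ.Real, IsOpen U ↔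
    ∀ r ≤ k, IsOpen (Subtype.val ⁻¹' U : Set ↥(Λ.skel r))


theorem isOpen_fract_preimage {t : Set ℝ} (ht : IsOpen t) (ht0 : t ⊆ Set.Ioi 0) :
    IsOpen (Int.fract ⁻¹' t) := by
  refine isOpen_iff_mem_nhds.2 fun x hx =>
    (continuousAt_fract fun hx' => ?_).preimage_mem_nhds (ht.mem_nhds hx)
  have hpos : 0 < Int.fract x := ht0 hx
  rw [Int.fract, ← hx', sub_self] at hpos
  exact lt_irrefl 0 hpos

namespace KGraph

variable {k : ℕ} {Λ : KGraph k}

theorem comp_injective_of_deg_eq {x y x' y' : Λ.Mor} (h : Λ.src x = Λ.rng y)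
    (h' : Λ.src x' = Λ.rng y') (hdeg : Λ.deg x = Λ.deg x')
    (he : Λ.comp x y = Λ.comp x' y') : x = x' ∧ y = y' := by
  have hdeg' : Λ.deg y = Λ.deg y' := add_left_cancel (a := Λ.deg x) <| by
    rw [← Λ.deg_comp x y h, he, Λ.deg_comp x' y' h', hdeg]
  obtain ⟨_, -, huniq⟩ := Λ.factor (Λ.comp x y) (Λ.deg x) (Λ.deg y) (Λ.deg_comp x y h)
  exact Prod.ext_iff.1 <| (huniq (x, y) ⟨rfl, rfl, h, rfl⟩).trans
    (huniq (x', y') ⟨hdeg.symm, hdeg'.symm, h', he.symm⟩).symm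

/-- `IsSeg a b m n` says that `b = a(m,n)`. -/
def IsSeg (a b : Λ.Mor) (m n : Fin k → ℕ) : Prop :=
  Λ.deg b = n - m ∧ ∃ x y : Λ.Mor, Λ.deg x = m ∧ Λ.src x = Λ.rng b ∧
    Λ.src b = Λ.rng y ∧ a = Λ.comp x (Λ.comp b y)

theorem IsSeg.unique {a b b' : Λ.Mor} {m n : Fin k → ℕ} (h : IsSeg a b m n)
    (h' : IsSeg a b' m n) : b = b' := by
  obtain ⟨hb, x, y, hx, hxb, hby, rfl⟩ := h
  obtain ⟨hb', x', y', hx', hxb', hby', ha⟩ := h'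
  have houter := comp_injective_of_deg_eq (by rwa [Λ.rng_comp b y hby])
    (by rwa [Λ.rng_comp b' y' hby']) (hx.trans hx'.symm) ha
  exact (comp_injective_of_deg_eq hby hby' (hb.trans hb'.symm) houter.2).1

theorem IsSeg.seg_eq {a b : Λ.Mor} {m n : Fin k → ℕ} (h : IsSeg a b m n) :
    Λ.seg a m n = b := by
  have hex : ∃ b, IsSeg a b m n := ⟨b, h⟩
  unfold KGraph.seg
  exact (dif_pos hex).trans (hex.choose_spec.unique h)

theorem isSeg_seg {a : Λ.Mor} {m n : Fin k → ℕ} (hmn : m ≤ n) (hn : n ≤ Λ.deg a) :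
    IsSeg a (Λ.seg a m n) m n := by
  obtain ⟨⟨x, c⟩, ⟨hx, hc, hxc, hxc_eq⟩, -⟩ :=
    Λ.factor a m (Λ.deg a - m) (add_tsub_cancel_of_le (hmn.trans hn)).symm
  obtain ⟨⟨b, y⟩, ⟨hb, -, hby, hby_eq⟩, -⟩ := Λ.factor c (n - m) (Λ.deg a - n) <| by
    rw [hc, add_comm, tsub_add_tsub_cancel hn hmn]
  have hseg : IsSeg a b m n := ⟨hb, x, y, hx, by rwa [← hby_eq, Λ.rng_comp b y hby] at hxc,
    hby, by rw [← hxc_eq, ← hby_eq]⟩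
  rwa [hseg.seg_eq]

theorem deg_seg {a : Λ.Mor} {m n : Fin k → ℕ} (hmn : m ≤ n) (hn : n ≤ Λ.deg a) :
    Λ.deg (Λ.seg a m n) = n - m :=
  (isSeg_seg hmn hn).1

theorem seg_zero_deg (a : Λ.Mor) : Λ.seg a 0 (Λ.deg a) = a :=
  IsSeg.seg_eq ⟨tsub_zero _, Λ.rng a, Λ.src a, Λ.deg_rng a, Λ.src_rng a,
    (Λ.rng_src a).symm, by rw [Λ.comp_id, Λ.id_comp]⟩

theorem IsSeg.trans {a b c : Λ.Mor} {m n p q : Fin k → ℕ} (hb : IsSeg a b m n)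
    (hc : IsSeg b c p q) : IsSeg a c (m + p) (m + q) := by
  obtain ⟨-, x, y, hx, hxb, hby, rfl⟩ := hb
  obtain ⟨hc, u, w, hu, huc, hcw, rfl⟩ := hc
  have hwy : Λ.src w = Λ.rng y := by
    rwa [Λ.src_comp u _ (by rwa [Λ.rng_comp c w hcw]), Λ.src_comp c w hcw] at hby
  have hxu : Λ.src x = Λ.rng u := by
    rwa [Λ.rng_comp u _ (by rwa [Λ.rng_comp c w hcw])] at hxb
  have hcwy : Λ.src c = Λ.rng (Λ.comp w y) := by rw [Λ.rng_comp w y hwy, hcw]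
  refine ⟨by rw [hc, add_tsub_add_eq_tsub_left], Λ.comp x u, Λ.comp w y,
    by rw [Λ.deg_comp x u hxu, hx, hu], by rw [Λ.src_comp x u hxu, huc], hcwy, ?_⟩
  rw [Λ.comp_assoc u _ y (by rwa [Λ.rng_comp c w hcw]) (by rwa [Λ.src_comp c w hcw]),
    Λ.comp_assoc c w y hcw hwy,
    Λ.comp_assoc x u _ hxu (by rwa [Λ.rng_comp c _ hcwy])]

theorem seg_seg {a : Λ.Mor} {m n p q : Fin k → ℕ} (hmn : m ≤ n) (hn : n ≤ Λ.deg a)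
    (hpq : p ≤ q) (hq : q ≤ n - m) :
    Λ.seg (Λ.seg a m n) p q = Λ.seg a (m + p) (m + q) :=
  (((isSeg_seg hmn hn).trans (isSeg_seg hpq (by rwa [deg_seg hmn hn]))).seg_eq).symm

theorem fl_apply (t : Fin k → ℝ) (i : Fin k) : fl t i = ⌊t i⌋₊ := Int.floor_toNat _

theorem ce_apply (t : Fin k → ℝ) (i : Fin k) : ce t i = ⌈t i⌉₊ := Int.ceil_toNat _

theorem frac_apply (t : Fin k → ℝ) (i : Fin k) : frac t i = t i - ⌊t i⌋₊ := by
  rw [← fl_apply]; rfl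

theorem fl_le_ce (t : Fin k → ℝ) : fl t ≤ ce t := fun i => by
  rw [fl_apply, ce_apply]; exact Nat.floor_le_ceil _

theorem ce_le_fl_add_one (t : Fin k → ℝ) : ce t ≤ fl t + 1 := fun i => by
  rw [Pi.add_apply, fl_apply, ce_apply]; exact Nat.ceil_le_floor_add_one _

theorem ce_le {t : Fin k → ℝ} {n : Fin k → ℕ} (h : ∀ i, t i ≤ n i) : ce t ≤ n := fun i => by
  rw [ce_apply]; exact Nat.ceil_le.2 (h i)

theorem le_fl {t : Fin k → ℝ} {m : Fin k → ℕ} (h : ∀ i, (m i : ℝ) ≤ t i) : m ≤ fl t :=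
  fun i => by rw [fl_apply]; exact Nat.le_floor (h i)

theorem natCast_fl_le {s : Fin k → ℝ} (hs : ∀ i, 0 ≤ s i) (i : Fin k) : (fl s i : ℝ) ≤ s i := by
  rw [fl_apply]; exact Nat.floor_le (hs i)

theorem le_natCast_ce (s : Fin k → ℝ) (i : Fin k) : s i ≤ ce s i := by
  rw [ce_apply]; exact Nat.le_ceil _

theorem ce_eq_fl_of_eq_natCast {t : Fin k → ℝ} {i : Fin k} {n : ℕ} (h : t i = n) :
    ce t i = fl t i := by
  rw [ce_apply, fl_apply, h, Nat.ceil_natCast, Nat.floor_natCast]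

theorem pt_congr {a b : Λ.Mor} {t t' : Fin k → ℝ} {h : ∀ i, 0 ≤ t i ∧ t i ≤ (Λ.deg a i : ℝ)}
    {h' : ∀ i, 0 ≤ t' i ∧ t' i ≤ (Λ.deg b i : ℝ)} (hab : a = b) (htt' : t = t') :
    Λ.pt a t h = Λ.pt b t' h' := by
  subst hab htt'; rfl

theorem sub_mem_box_seg {a : Λ.Mor} {s : Fin k → ℝ} {m n : Fin k → ℕ}
    (hms : ∀ i, (m i : ℝ) ≤ s i) (hsn : ∀ i, s i ≤ n i) (hn : n ≤ Λ.deg a) :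
    ∀ i, 0 ≤ s i - m i ∧ s i - m i ≤ (Λ.deg (Λ.seg a m n) i : ℝ) := by
  have hmn : m ≤ n := fun i => Nat.cast_le.1 ((hms i).trans (hsn i))
  intro i
  rw [deg_seg hmn hn, Pi.sub_apply, Nat.cast_sub (hmn i)]
  exact ⟨sub_nonneg.2 (hms i), sub_le_sub_right (hsn i) _⟩

theorem pt_eq_pt_seg {a : Λ.Mor} {s : Fin k → ℝ} (hs : ∀ i, 0 ≤ s i ∧ s i ≤ (Λ.deg a i : ℝ))
    {m n : Fin k → ℕ} (hms : ∀ i, (m i : ℝ) ≤ s i) (hsn : ∀ i, s i ≤ n i)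
    (hn : n ≤ Λ.deg a) :
    Λ.pt a s hs = Λ.pt (Λ.seg a m n) (fun i => s i - m i) (sub_mem_box_seg hms hsn hn) := by
  have hmn : m ≤ n := fun i => Nat.cast_le.1 ((hms i).trans (hsn i))
  have hm : m ≤ fl s := le_fl hms
  have hfl : fl (fun i => s i - m i) = fl s - m := funext fun i => by
    simp only [fl_apply, Pi.sub_apply, Nat.floor_sub_natCast]
  have hce : ce (fun i => s i - m i) = ce s - m := funext fun i => by
    simp only [ce_apply, Pi.sub_apply, Nat.ceil_sub_natCast]
  refine Quot.sound ⟨?_, funext fun i => ?_⟩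
  · change Λ.seg a (fl s) (ce s) = Λ.seg (Λ.seg a m n) (fl _) (ce _)
    rw [hfl, hce, seg_seg hmn hn (tsub_le_tsub_right (fl_le_ce s) m)
      (tsub_le_tsub_right (ce_le hsn) m), add_tsub_cancel_of_le hm,
      add_tsub_cancel_of_le (hm.trans (fl_le_ce s))]
  · rw [frac_apply, frac_apply, Nat.floor_sub_natCast,
      Nat.cast_sub (by rw [← fl_apply]; exact hm i)]
    ring

theorem deg_seg_fl_ce_le_one (a : Λ.Mor) {s : Fin k → ℝ}
    (hs : ∀ i, 0 ≤ s i ∧ s i ≤ (Λ.deg a i : ℝ)) : Λ.deg (Λ.seg a (fl s) (ce s)) ≤ 1 := by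
  rw [deg_seg (fl_le_ce s) (ce_le fun i => (hs i).2)]
  exact tsub_le_iff_left.2 (ce_le_fl_add_one s)

theorem pt_mem_Qcube_seg_fl_ce {a : Λ.Mor} {s : Fin k → ℝ}
    (hs : ∀ i, 0 ≤ s i ∧ s i ≤ (Λ.deg a i : ℝ)) :
    Λ.pt a s hs ∈ Λ.Qcube (Λ.seg a (fl s) (ce s)) := by
  have hms := natCast_fl_le fun i => (hs i).1
  have hsn := le_natCast_ce s
  have hn : ce s ≤ Λ.deg a := ce_le fun i => (hs i).2
  refine ⟨_, sub_mem_box_seg hms hsn hn, fun i hi => ⟨?_, ?_⟩, pt_eq_pt_seg hs hms hsn hn⟩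
  · refine sub_pos.2 <| (hms i).lt_of_ne fun heq => ?_
    rw [deg_seg (fl_le_ce s) hn, Pi.sub_apply, ce_eq_fl_of_eq_natCast heq.symm,
      Nat.sub_self] at hi
    exact zero_ne_one hi
  · rw [sub_lt_iff_lt_add', fl_apply]
    exact Nat.lt_floor_add_one _

def closedCube (d : Fin k → ℕ) : Set (Fin k → ℝ) := {t | ∀ i, 0 ≤ t i ∧ t i ≤ d i}

/-- The paper's `(0, d)`. -/
def openCube (d : Fin k → ℕ) : Set (closedCube d) :=
  {tp | ∀ i, d i = 1 → 0 < tp.1 i ∧ tp.1 i < 1}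

section Cube

variable {d : Fin k → ℕ} {t : Fin k → ℝ}

theorem eq_zero_of_mem_closedCube (h : t ∈ closedCube d) {i : Fin k} (hi : d i = 0) :
    t i = 0 :=
  le_antisymm (by simpa [hi] using (h i).2) (h i).1

theorem fl_eq_zero_of_mem_openCube (hd : d ≤ 1) (h : t ∈ closedCube d)
    (hc : ∀ i, d i = 1 → 0 < t i ∧ t i < 1) : fl t = 0 := funext fun i => by
  rw [fl_apply, Pi.zero_apply, Nat.floor_eq_zero]
  rcases Nat.le_one_iff_eq_zero_or_eq_one.1 (hd i) with hi | hi
  · rw [eq_zero_of_mem_closedCube h hi]; exact zero_lt_one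
  · exact (hc i hi).2

theorem ce_eq_of_mem_openCube (hd : d ≤ 1) (h : t ∈ closedCube d)
    (hc : ∀ i, d i = 1 → 0 < t i ∧ t i < 1) : ce t = d := funext fun i => by
  rw [ce_apply]
  rcases Nat.le_one_iff_eq_zero_or_eq_one.1 (hd i) with hi | hi
  · rw [hi, eq_zero_of_mem_closedCube h hi, Nat.ceil_zero]
  · rw [hi, Nat.ceil_eq_iff one_ne_zero]
    exact ⟨by simpa using (hc i hi).1, by simpa [hi] using (h i).2⟩

theorem frac_eq_self_of_mem_openCube (hd : d ≤ 1) (h : t ∈ closedCube d)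
    (hc : ∀ i, d i = 1 → 0 < t i ∧ t i < 1) : frac t = t := funext fun i => by
  rw [frac_apply, ← fl_apply, fl_eq_zero_of_mem_openCube hd h hc]; simp

end Cube

theorem seg_fl_ce_eq_self_of_mem_openCube {lam : Λ.Mor} {t : Fin k → ℝ}
    (hd : Λ.deg lam ≤ 1) (h : t ∈ closedCube (Λ.deg lam))
    (hc : ∀ i, Λ.deg lam i = 1 → 0 < t i ∧ t i < 1) : Λ.seg lam (fl t) (ce t) = lam := by
  rw [fl_eq_zero_of_mem_openCube hd h hc, ce_eq_of_mem_openCube hd h hc, seg_zero_deg]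

theorem eq_of_pt_eq_pt {lam lam' : Λ.Mor} {t t' : Fin k → ℝ}
    (hd : Λ.deg lam ≤ 1) (hd' : Λ.deg lam' ≤ 1)
    {h : ∀ i, 0 ≤ t i ∧ t i ≤ (Λ.deg lam i : ℝ)}
    {h' : ∀ i, 0 ≤ t' i ∧ t' i ≤ (Λ.deg lam' i : ℝ)}
    (hc : ∀ i, Λ.deg lam i = 1 → 0 < t i ∧ t i < 1)
    (hc' : ∀ i, Λ.deg lam' i = 1 → 0 < t' i ∧ t' i < 1)
    (heq : Λ.pt lam t h = Λ.pt lam' t' h') : lam = lam' ∧ t = t' := by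
  obtain ⟨hseg, hfrac⟩ := Quotient.exact heq
  rw [seg_fl_ce_eq_self_of_mem_openCube hd h hc,
    seg_fl_ce_eq_self_of_mem_openCube hd' h' hc'] at hseg
  rw [frac_eq_self_of_mem_openCube hd h hc, frac_eq_self_of_mem_openCube hd' h' hc'] at hfrac
  exact ⟨hseg, hfrac⟩

theorem isQuotientMap_mk (Λ : KGraph k) :
    Topology.IsQuotientMap (Quotient.mk Λ.ptSetoid) :=
  letI := Λ.ptSetoid
  isQuotientMap_quotient_mk'

theorem frac_eq_fract {t : Fin k → ℝ} {i : Fin k} (h : 0 ≤ t i) :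
    frac t i = Int.fract (t i) := by
  rw [frac_apply, natCast_floor_eq_intCast_floor h, Int.self_sub_floor]

noncomputable def fracCoord (Λ : KGraph k) (i : Fin k) : Λ.Real → ℝ :=
  Quotient.lift (fun p : Λ.Points => frac p.2.1 i) fun _ _ h => congrFun h.2 i

theorem fracCoord_pt (i : Fin k) (a : Λ.Mor) (t : Fin k → ℝ)
    (h : ∀ i, 0 ≤ t i ∧ t i ≤ (Λ.deg a i : ℝ)) :
    fracCoord Λ i (Λ.pt a t h) = frac t i := rfl

theorem isOpen_fracCoord_preimage (i : Fin k) {t : Set ℝ} (ht : IsOpen t)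
    (ht0 : t ⊆ Set.Ioi 0) : IsOpen (fracCoord Λ i ⁻¹' t) := by
  refine (isQuotientMap_mk Λ).isOpen_preimage.1 (isOpen_sigma_iff.2 fun a => ?_)
  have hcoord : Continuous fun s : {s : Fin k → ℝ // ∀ i, 0 ≤ s i ∧ s i ≤ (Λ.deg a i : ℝ)} =>
      s.1 i := (continuous_apply i).comp continuous_subtype_val
  convert hcoord.isOpen_preimage _ (isOpen_fract_preimage ht ht0) using 1
  ext s
  exact iff_of_eq (congrArg (· ∈ t) (frac_eq_fract (s.2 i).1))

theorem continuousOn_fracCoord (i : Fin k) :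
    ContinuousOn (fracCoord Λ i) (fracCoord Λ i ⁻¹' Set.Ioi 0) := by
  refine (continuousOn_open_iff (isOpen_fracCoord_preimage i isOpen_Ioi subset_rfl)).2
    fun t ht => ?_
  rw [← Set.preimage_inter]
  exact isOpen_fracCoord_preimage i (isOpen_Ioi.inter ht) Set.inter_subset_left

theorem fracCoord_eq_of_mem_Qcube {lam : Λ.Mor} (hd : Λ.deg lam ≤ 1) {t : Fin k → ℝ}
    {h : ∀ i, 0 ≤ t i ∧ t i ≤ (Λ.deg lam i : ℝ)}
    (hc : ∀ i, Λ.deg lam i = 1 → 0 < t i ∧ t i < 1) (i : Fin k) :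
    fracCoord Λ i (Λ.pt lam t h) = t i := by
  rw [fracCoord_pt, frac_eq_self_of_mem_openCube hd h hc]

theorem continuousOn_fracCoord_Qcube {lam : Λ.Mor} (hd : Λ.deg lam ≤ 1) (i : Fin k) :
    ContinuousOn (fracCoord Λ i) (Λ.Qcube lam) := by
  rcases Nat.le_one_iff_eq_zero_or_eq_one.1 (hd i) with hi | hi
  · refine (continuousOn_const (c := 0)).congr fun x hx => ?_
    obtain ⟨t, h, hc, rfl⟩ := hx
    rw [fracCoord_eq_of_mem_Qcube hd hc, eq_zero_of_mem_closedCube h hi]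
  · refine (continuousOn_fracCoord i).mono fun x hx => ?_
    obtain ⟨t, h, hc, rfl⟩ := hx
    rw [Set.mem_preimage, fracCoord_eq_of_mem_Qcube hd hc]
    exact (hc i hi).1

theorem skel_mono (Λ : KGraph k) : Monotone Λ.skel :=
  monotone_nat_of_le_succ fun _ => Set.subset_union_left

theorem Qcube_subset_skel {lam : Λ.Mor} (hd : Λ.deg lam ≤ 1) {r : ℕ}
    (hr : ∑ i, Λ.deg lam i ≤ r) : Λ.Qcube lam ⊆ Λ.skel r := by
  refine Set.Subset.trans ?_ (skel_mono Λ hr)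
  change Λ.Qcube lam ⊆ skel' Λ _
  rcases hsum : ∑ i, Λ.deg lam i with _ | r
  · have hzero : Λ.deg lam = 0 :=
      funext fun i => Finset.sum_eq_zero_iff.1 hsum i (Finset.mem_univ i)
    exact Set.subset_biUnion_of_mem (u := Λ.Qcube) hzero
  · exact Set.subset_union_of_subset_right
      (Set.subset_biUnion_of_mem (u := Λ.Qcube)
        (show lam ∈ {lam | Λ.deg lam ≤ 1 ∧ ∑ i, Λ.deg lam i = r + 1} from ⟨hd, hsum⟩)) _

theorem continuous_pt (a : Λ.Mor) :
    Continuous fun s : closedCube (Λ.deg a) => Λ.pt a s.1 s.2 :=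
  (isQuotientMap_mk Λ).continuous.comp
    (continuous_sigmaMk.comp (continuous_subtype_val.subtype_mk _))

noncomputable def charMap (Λ : KGraph k) (lam : Λ.Mor) : C(closedCube (Λ.deg lam), Λ.Real) :=
  ⟨fun tp => Λ.pt lam tp.1 tp.2, continuous_pt lam⟩

noncomputable def openCubeHomeo {d : Fin k → ℕ} (hd : d ≤ 1) :
    openCube d ≃ₜ {u : Fin (∑ i, d i) → ℝ | ∀ j, 0 < u j ∧ u j < 1} :=
  let e : {i // d i = 1} ≃ Fin (∑ i, d i) := Fintype.equivFinOfCardEq <| by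
    rw [Fintype.card_subtype, Finset.card_filter]
    refine Finset.sum_congr rfl fun i _ => ?_
    rcases Nat.le_one_iff_eq_zero_or_eq_one.1 (hd i) with hi | hi <;> simp [hi]
  { toFun := fun tp => ⟨fun j => tp.1.1 (e.symm j), fun j => tp.2 _ (e.symm j).2⟩
    invFun := fun u => ⟨⟨fun i => if hi : d i = 1 then u.1 (e ⟨i, hi⟩) else 0, fun i => by
        by_cases hi : d i = 1
        · simpa [hi] using And.imp le_of_lt le_of_lt (u.2 (e ⟨i, hi⟩))
        · simp [hi]⟩,
      fun i hi => by simpa [hi] using u.2 (e ⟨i, hi⟩)⟩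
    left_inv := fun tp => by
      refine Subtype.ext (Subtype.ext (funext fun i => ?_))
      by_cases hi : d i = 1
      · simp [hi]
      · have hi0 := (Nat.le_one_iff_eq_zero_or_eq_one.1 (hd i)).resolve_right hi
        simp [hi, eq_zero_of_mem_closedCube tp.1.2 hi0]
    right_inv := fun u => Subtype.ext (funext fun j => by simp [(e.symm j).2])
    continuous_toFun := by
      refine .subtype_mk (continuous_pi fun j => ?_) _
      exact (continuous_apply _).comp (continuous_subtype_val.comp continuous_subtype_val)
    continuous_invFun := by
      refine .subtype_mk (.subtype_mk (continuous_pi fun i => ?_) _) _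
      by_cases hi : d i = 1
      · simp only [dif_pos hi]
        exact (continuous_apply _).comp continuous_subtype_val
      · simp only [dif_neg hi]
        exact continuous_const }

theorem fracCoord_spec_of_mem_Qcube {lam : Λ.Mor} (hd : Λ.deg lam ≤ 1) {x : Λ.Real}
    (hx : x ∈ Λ.Qcube lam) :
    ∃ h : (fun i => fracCoord Λ i x) ∈ closedCube (Λ.deg lam),
      (∀ i, Λ.deg lam i = 1 → 0 < fracCoord Λ i x ∧ fracCoord Λ i x < 1) ∧
        x = Λ.pt lam _ h := by
  obtain ⟨t, h, hc, rfl⟩ := hx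
  have ht : (fun i => fracCoord Λ i (Λ.pt lam t h)) = t :=
    funext (fracCoord_eq_of_mem_Qcube hd hc)
  exact ⟨by rw [ht]; exact h, fun i hi => by rw [fracCoord_eq_of_mem_Qcube hd hc]; exact hc i hi,
    pt_congr rfl ht.symm⟩

noncomputable def openCubeHomeoQcube {lam : Λ.Mor} (hd : Λ.deg lam ≤ 1) :
    openCube (Λ.deg lam) ≃ₜ Λ.Qcube lam where
  toFun tp := ⟨Λ.pt lam tp.1.1 tp.1.2, tp.1.1, tp.1.2, tp.2, rfl⟩
  invFun x := ⟨⟨fun i => fracCoord Λ i x, (fracCoord_spec_of_mem_Qcube hd x.2).1⟩,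
    (fracCoord_spec_of_mem_Qcube hd x.2).2.1⟩
  left_inv tp := Subtype.ext (Subtype.ext (funext (fracCoord_eq_of_mem_Qcube hd tp.2)))
  right_inv x := Subtype.ext (fracCoord_spec_of_mem_Qcube hd x.2).2.2.symm
  continuous_toFun := ((continuous_pt lam).comp continuous_subtype_val).subtype_mk _
  continuous_invFun := .subtype_mk (.subtype_mk (continuous_pi fun i =>
    (continuousOn_fracCoord_Qcube hd i).domRestrict) _) _

theorem exists_pt_eq_pt_iff {a lam : Λ.Mor} {s : Fin k → ℝ}
    (hs : ∀ i, 0 ≤ s i ∧ s i ≤ (Λ.deg a i : ℝ)) :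
    (∃ (t : Fin k → ℝ) (h : ∀ i, 0 ≤ t i ∧ t i ≤ (Λ.deg lam i : ℝ)),
        Λ.pt lam t h = Λ.pt a s hs) ↔
      ∃ m n : Fin k → ℕ, (m ≤ n ∧ n ≤ Λ.deg a ∧ ∃ ε δ : Fin k → ℕ, ε ≤ δ ∧ δ ≤ Λ.deg lam ∧
        Λ.seg a m n = Λ.seg lam ε δ) ∧ s ∈ Set.Icc (fun i => (m i : ℝ)) (fun i => (n i : ℝ)) := by
  constructor
  · rintro ⟨t, h, heq⟩
    refine ⟨fl s, ce s, ⟨fl_le_ce s, ce_le fun i => (hs i).2, fl t, ce t, fl_le_ce t,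
      ce_le fun i => (h i).2, (Quotient.exact heq).1.symm⟩,
      natCast_fl_le fun i => (hs i).1, le_natCast_ce s⟩
  · rintro ⟨m, n, ⟨hmn, hn, ε, δ, hεδ, hδ, hseg⟩, hms, hsn⟩
    have hwidth : ∀ i, (n i : ℝ) - m i = δ i - ε i := fun i => by
      have := congrFun ((deg_seg hmn hn).symm.trans (hseg ▸ deg_seg hεδ hδ)) i
      simp only [Pi.sub_apply] at this
      rw [← Nat.cast_sub (hmn i), ← Nat.cast_sub (hεδ i), this]
    have hεt : ∀ i, (ε i : ℝ) ≤ s i - m i + ε i := fun i => by linarith [hms i]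
    have htδ : ∀ i, s i - m i + ε i ≤ δ i := fun i => by linarith [hsn i, hwidth i]
    have ht : ∀ i, 0 ≤ s i - m i + ε i ∧ s i - m i + ε i ≤ (Λ.deg lam i : ℝ) :=
      fun i => ⟨(Nat.cast_nonneg _).trans (hεt i),
        (htδ i).trans (Nat.cast_le.2 (hδ i))⟩
    refine ⟨_, ht, ?_⟩
    rw [pt_eq_pt_seg ht hεt htδ hδ, pt_eq_pt_seg hs hms hsn hn]
    exact pt_congr hseg.symm (funext fun i => by ring)

theorem isClosed_range_charMap (lam : Λ.Mor) : IsClosed (Set.range (charMap Λ lam)) := by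
  refine (isQuotientMap_mk Λ).isClosed_preimage.1 (isClosed_sigma_iff.2 fun a => ?_)
  let boxes := {mn : (Fin k → ℕ) × (Fin k → ℕ) | mn.1 ≤ mn.2 ∧ mn.2 ≤ Λ.deg a ∧
    ∃ ε δ : Fin k → ℕ, ε ≤ δ ∧ δ ≤ Λ.deg lam ∧ Λ.seg a mn.1 mn.2 = Λ.seg lam ε δ}
  have hfin : boxes.Finite := ((Set.finite_Iic _).prod (Set.finite_Iic _)).subset
    fun mn h => ⟨h.1.trans h.2.1, h.2.1⟩
  convert hfin.isClosed_biUnion fun mn _ => (isClosed_Icc (a := fun i => (mn.1 i : ℝ))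
    (b := fun i => (mn.2 i : ℝ))).preimage continuous_subtype_val using 1
  ext ⟨s, hs⟩
  simp only [Set.mem_preimage, Set.mem_iUnion, exists_prop, Prod.exists]
  exact Subtype.exists.trans (exists_pt_eq_pt_iff hs)

theorem dense_openCube {d : Fin k → ℕ} (hd : d ≤ 1) : Dense (openCube d) := by
  let U : Fin k → Set ℝ := fun i => if d i = 1 then Set.Ioo 0 1 else {0}
  have hU : Set.univ.pi U ⊆ Subtype.val '' openCube d := fun u hu => by
    have hbox : u ∈ closedCube d := fun i => by
      have hui := hu i (Set.mem_univ i)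
      rcases Nat.le_one_iff_eq_zero_or_eq_one.1 (hd i) with hi | hi
      · simp_all [U]
      · simp only [U, hi, if_true, Set.mem_Ioo] at hui
        simpa [hi] using And.imp le_of_lt le_of_lt hui
    exact ⟨⟨u, hbox⟩, fun i hi => by simpa [U, hi] using hu i (Set.mem_univ i), rfl⟩
  refine Topology.IsInducing.subtypeVal.dense_iff.2 fun tp => closure_mono hU ?_
  rw [closure_pi_set]
  intro i _
  rcases Nat.le_one_iff_eq_zero_or_eq_one.1 (hd i) with hi | hi
  · simp [U, hi, eq_zero_of_mem_closedCube tp.2 hi]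
  · simpa [U, hi, closure_Ioo zero_ne_one] using tp.2 i

theorem charMap_image_openCube (lam : Λ.Mor) :
    charMap Λ lam '' openCube (Λ.deg lam) = Λ.Qcube lam := by
  ext x
  constructor
  · rintro ⟨tp, htp, rfl⟩
    exact ⟨tp.1, tp.2, htp, rfl⟩
  · rintro ⟨t, h, hc, rfl⟩
    exact ⟨⟨t, h⟩, hc, rfl⟩

theorem range_charMap {lam : Λ.Mor} (hd : Λ.deg lam ≤ 1) :
    Set.range (charMap Λ lam) = closure (Λ.Qcube lam) := by
  rw [← charMap_image_openCube]
  refine (closure_minimal (Set.image_subset_range _ _) (isClosed_range_charMap lam)).antisymm' ?_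
  rw [← Set.image_univ, ← (dense_openCube hd).closure_eq]
  exact image_closure_subset_closure_image (charMap Λ lam).continuous

theorem charMap_image_boundary_subset (lam : Λ.Mor) :
    charMap Λ lam '' (openCube (Λ.deg lam))ᶜ ⊆ Λ.skel (∑ i, Λ.deg lam i - 1) := by
  rintro _ ⟨⟨t, h⟩, htp, rfl⟩
  obtain ⟨i₀, hi₀, hbd⟩ : ∃ i₀, Λ.deg lam i₀ = 1 ∧ (0 < t i₀ → 1 ≤ t i₀) := by
    simpa [openCube] using htp
  have hint : ∃ n : ℕ, t i₀ = n := by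
    rcases (h i₀).1.eq_or_lt with h0 | h0
    · exact ⟨0, by simp [h0]⟩
    · exact ⟨1, le_antisymm (by simpa [hi₀] using (h i₀).2) (by simpa using hbd h0)⟩
  have hce : ce t ≤ Λ.deg lam := ce_le fun i => (h i).2
  have hdeg := deg_seg (fl_le_ce t) hce
  refine Qcube_subset_skel (deg_seg_fl_ce_le_one lam h) ?_ (pt_mem_Qcube_seg_fl_ce h)
  have hlt : ∑ i, Λ.deg (Λ.seg lam (fl t) (ce t)) i < ∑ i, Λ.deg lam i := by
    rw [hdeg]
    refine Finset.sum_lt_sum (fun i _ => (Nat.sub_le _ _).trans (hce i))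
      ⟨i₀, Finset.mem_univ _, ?_⟩
    obtain ⟨n, hn⟩ := hint
    rw [Pi.sub_apply, ce_eq_fl_of_eq_natCast hn, Nat.sub_self, hi₀]
    exact zero_lt_one
  omega

theorem iUnion_Qcube_eq_univ (Λ : KGraph k) :
    ⋃ lam ∈ {lam : Λ.Mor | Λ.deg lam ≤ 1}, Λ.Qcube lam = Set.univ := by
  refine Set.eq_univ_of_forall fun x => ?_
  obtain ⟨⟨a, s, hs⟩, rfl⟩ := Quotient.exists_rep x
  exact Set.mem_biUnion (deg_seg_fl_ce_le_one a hs) (pt_mem_Qcube_seg_fl_ce hs)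

theorem skel_eq_univ (Λ : KGraph k) : Λ.skel k = Set.univ := by
  refine Set.eq_univ_of_subset (Set.iUnion₂_subset fun lam hlam => ?_) (iUnion_Qcube_eq_univ Λ)
  refine Qcube_subset_skel hlam ((Finset.sum_le_sum fun i _ => hlam i).trans ?_)
  simp

end KGraph

open KGraph in
/-- The topological realization `X_Λ` of a `k`-graph is a
`k`-dimensional CW-complex with `r`-skeleton `X_Λ^r` for `r ≤ k`, whose open
cells are the `Q_λ` for `d(λ) ≤ 1_k` (of dimension `|d(λ)|`) and whose closed
cells are their closures. -/
theorem realization_is_CW_complex (k : ℕ) (Λ : KGraph k) :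
    RealizationIsCWComplex Λ := by
  refine ⟨skel_eq_univ Λ, iUnion_Qcube_eq_univ Λ, ?disjoint, fun lam hd => ?dim,
    fun lam hd => ?charMaps, fun U => ?weak⟩
  case disjoint =>
    exact fun lam hlam lam' hlam' hne =>
      Set.disjoint_left.2 fun _ ⟨_, _, hc, hx⟩ ⟨_, _, hc', hx'⟩ =>
        hne (eq_of_pt_eq_pt hlam hlam' hc hc' (hx.symm.trans hx')).1
  case dim => exact ⟨(openCubeHomeoQcube hd).symm.trans (openCubeHomeo hd)⟩
  case charMaps =>
    exact ⟨charMap Λ lam, fun _ => rfl, range_charMap hd,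
      ⟨openCubeHomeoQcube hd, fun _ => rfl⟩, charMap_image_boundary_subset lam⟩
  case weak =>
    refine ⟨fun hU r _ => hU.preimage continuous_subtype_val, fun h => ?_⟩
    have hopen := (skel_eq_univ Λ ▸ isOpen_univ).isOpenMap_subtype_val _ (h k le_rfl)
    rwa [Subtype.image_preimage_coe, skel_eq_univ, Set.univ_inter] at hopen
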